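/- arXiv:2108.05904 — 3 statements merged into one kernel-verified Lean document; each statement's English description precedes it below -/
import Mathlib

section
/- Let H_A, H_B be finite-dimensional Hilbert spaces and T : B(H_A ⊗ H_B) → B(H_A ⊗ H_B) a positive linear map. Then T(1 ⊗ b) = 1 ⊗ b for all b ∈ B(H_B) if and only if there exists a unital positive linear map S : B(H_A) → B(H_A) such that T(a ⊗ b) = S(a) ⊗ b for all a ∈ B(H_A), b ∈ B(H_B). -/
open Matrix Kronecker ComplexOrder

/-!
A unital positive map `T` on matrices satisfies the Kadison–Schwarz inequality
`T h * T h ≤ T (h * h)` for Hermitian `h`: writing `h = ∑ cᵢ pᵢ` spectrally, the defect is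
`∑ (cᵢ - T h) T (pᵢ) (cᵢ - T h)`. Applied to `a + t s` for all real `t`, it shows that a Hermitian
`a` with `T (a * a) = T a * T a` satisfies the Jordan identity `T (a X + X a) = T a T X + T X T a`.
If `T` fixes every `1 ⊗ b`, then every Hermitian `1 ⊗ b` is such an element, and combining the
Jordan identities for `u`, `v`, `u v`, `v u` gives `T (u X v + v X u) = u T(X) v + v T(X) u`. Compressing by
`1 ⊗ eₚₚ` shows that `T (a ⊗ eₚₚ) = S a ⊗ eₚₚ` for the corner `S a` of `T (a ⊗ eₚₚ)`, and
sandwiching between `1 ⊗ eₖₚ` and `1 ⊗ eₚₗ` carries this over to every matrix unit `eₖₗ`.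
-/

theorem Complex.eq_zero_of_forall_ofReal_mul_add_sq_mul_nonneg {z w : ℂ}
    (h : ∀ t : ℝ, 0 ≤ (t : ℂ) * z + (t : ℂ) ^ 2 * w) : z = 0 := by
  have him : z.im = 0 := by
    have h₁ := (Complex.le_def.mp (h 1)).2
    have h₂ := (Complex.le_def.mp (h (-1))).2
    simp only [zero_im, ofReal_one, one_mul, one_pow, add_im, ofReal_neg, neg_mul, even_two,
      Even.neg_pow, neg_im] at h₁ h₂
    linarith
  have hre : z.re ^ 2 ≤ 0 := by
    have := discrim_le_zero (K := ℝ) (a := w.re) (b := z.re) (c := 0) fun t => by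
      have := (Complex.le_def.mp (h t)).1
      simp only [zero_re, ← ofReal_pow, add_re, mul_re, ofReal_re, ofReal_im, zero_mul,
        sub_zero] at this
      nlinarith
    simpa [discrim] using this
  exact Complex.ext (pow_eq_zero_iff two_ne_zero |>.mp (le_antisymm hre (sq_nonneg _))) him

namespace LinearMap

variable {A : Type*} [Ring A] {u v : A}

theorem map_jordan_add_smul {R : Type*} [CommSemiring R] [Algebra R A] (T : A →ₗ[R] A)
    (hu : ∀ X, T (u * X + X * u) = u * T X + T X * u)
    (hv : ∀ X, T (v * X + X * v) = v * T X + T X * v) (c : R) (X : A) :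
    T ((u + c • v) * X + X * (u + c • v)) = (u + c • v) * T X + T X * (u + c • v) := by
  have split (w : A) :
      (u + c • v) * w + w * (u + c • v) = (u * w + w * u) + c • (v * w + w * v) := by
    simp only [add_mul, mul_add, smul_mul_assoc, mul_smul_comm, smul_add]
    abel
  rw [split, map_add, map_smul, hu, hv, split]

theorem map_mul_mul_add_mul_mul_of_jordan {𝕜 : Type*} [Field 𝕜] [CharZero 𝕜] [Algebra 𝕜 A]
    (T : A →ₗ[𝕜] A)
    (hu : ∀ X, T (u * X + X * u) = u * T X + T X * u)
    (hv : ∀ X, T (v * X + X * v) = v * T X + T X * v)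
    (huv : ∀ X, T (u * v * X + X * (u * v)) = u * v * T X + T X * (u * v))
    (hvu : ∀ X, T (v * u * X + X * (v * u)) = v * u * T X + T X * (v * u)) (X : A) :
    T (u * X * v + v * X * u) = u * T X * v + v * T X * u := by
  have key : ∀ Y : A, (u * (v * Y + Y * v) + (v * Y + Y * v) * u)
      + (v * (u * Y + Y * u) + (u * Y + Y * u) * v)
      - ((u * v) * Y + Y * (u * v)) - ((v * u) * Y + Y * (v * u))
      = (2 : 𝕜) • (u * Y * v + v * Y * u) := fun Y => by
    rw [two_smul]; noncomm_ring
  apply smul_right_injective A (two_ne_zero (α := 𝕜))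
  dsimp only
  rw [← map_smul, ← key X, ← key (T X), map_sub, map_sub, map_add, hu, hv, hv, hu, huv, hvu]

end LinearMap

namespace Matrix

section RCLike

variable {𝕜 ι : Type*} [RCLike 𝕜] [Fintype ι] [DecidableEq ι]

theorem IsHermitian.exists_sum_smul_posSemidef {h : Matrix ι ι 𝕜} (hh : h.IsHermitian) :
    ∃ (c : ι → ℝ) (p : ι → Matrix ι ι 𝕜), (∀ i, (p i).PosSemidef) ∧ ∑ i, p i = 1 ∧
      h = ∑ i, (c i : 𝕜) • p i ∧ h * h = ∑ i, (c i : 𝕜) ^ 2 • p i := by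
  set φ := Unitary.conjStarAlgAut 𝕜 (Matrix ι ι 𝕜) hh.eigenvectorUnitary
  have hφ (d : ι → 𝕜) : φ (diagonal d) = ∑ i, d i • φ (single i i 1) := by
    simp_rw [← sum_single_eq_diagonal, map_sum, ← map_smul, smul_single, smul_eq_mul, mul_one]
  refine ⟨hh.eigenvalues, fun i => φ (single i i 1), fun i => ?_, ?_, ?_, ?_⟩
  · have : single i i (1 : 𝕜) = (single i i 1)ᴴ * single i i 1 := by simp
    dsimp only
    rw [this, map_mul, ← star_eq_conjTranspose, map_star, star_eq_conjTranspose]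
    exact posSemidef_conjTranspose_mul_self _
  · rw [← map_sum, sum_single_one, map_one]
  · conv_lhs => rw [hh.spectral_theorem]
    exact hφ _
  · conv_lhs => rw [hh.spectral_theorem, ← map_mul, diagonal_mul_diagonal]
    simp only [Function.comp_def, ← sq]
    exact hφ _

variable (T : Matrix ι ι 𝕜 →ₗ[𝕜] Matrix ι ι 𝕜) (hT : ∀ x, x.PosSemidef → (T x).PosSemidef)
  (hT1 : T 1 = 1)
include hT hT1

theorem posSemidef_map_sum_sq_smul_sub {κ : Type*} [Fintype κ] {p : κ → Matrix ι ι 𝕜}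
    (hp : ∀ i, (p i).PosSemidef) (hp1 : ∑ i, p i = 1) (c : κ → ℝ) :
    (T (∑ i, (c i : 𝕜) ^ 2 • p i) -
      T (∑ i, (c i : 𝕜) • p i) * T (∑ i, (c i : 𝕜) • p i)).PosSemidef := by
  set B := T (∑ i, (c i : 𝕜) • p i)
  have hB : Bᴴ = B := by
    simp only [B, map_sum, map_smul, conjTranspose_sum, conjTranspose_smul, (hT _ (hp _)).1.eq,
      RCLike.star_def, RCLike.conj_ofReal]
  have hTp : ∑ i, T (p i) = 1 := by rw [← map_sum, hp1, hT1]
  have hTc : ∑ i, (c i : 𝕜) • T (p i) = B := by simp only [B, map_sum, map_smul]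
  have hTc2 : ∑ i, (c i : 𝕜) ^ 2 • T (p i) = T (∑ i, (c i : 𝕜) ^ 2 • p i) := by
    simp only [map_sum, map_smul]
  have key : ∑ i, ((c i : 𝕜) • 1 - B) * T (p i) * ((c i : 𝕜) • 1 - B)ᴴ =
      T (∑ i, (c i : 𝕜) ^ 2 • p i) - B * B :=
    calc _ = ∑ i, ((c i : 𝕜) ^ 2 • T (p i) - ((c i : 𝕜) • T (p i)) * B
          - B * ((c i : 𝕜) • T (p i)) + B * T (p i) * B) := by
          refine Finset.sum_congr rfl fun i _ => ?_
          simp only [conjTranspose_sub, conjTranspose_smul, conjTranspose_one, hB,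
            RCLike.star_def, RCLike.conj_ofReal, sub_mul, mul_sub, Matrix.smul_mul,
            Matrix.mul_smul, one_mul, mul_one, smul_smul, sq]
          abel
      _ = T (∑ i, (c i : 𝕜) ^ 2 • p i) - B * B - B * B + B * 1 * B := by
          simp only [Finset.sum_add_distrib, Finset.sum_sub_distrib, ← Finset.sum_mul,
            ← Finset.mul_sum, hTc, hTc2, hTp]
      _ = _ := by noncomm_ring
  rw [← key]
  exact posSemidef_sum _ fun i _ => (hT _ (hp i)).mul_mul_conjTranspose_same _

theorem posSemidef_map_mul_self_sub {h : Matrix ι ι 𝕜} (hh : h.IsHermitian) :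
    (T (h * h) - T h * T h).PosSemidef := by
  obtain ⟨c, p, hp, hp1, rfl, hsq⟩ := hh.exists_sum_smul_posSemidef
  rw [hsq]
  exact posSemidef_map_sum_sq_smul_sub T hT hT1 hp hp1 c

end RCLike

variable {ι : Type*} [Fintype ι]

theorem eq_zero_of_forall_star_dotProduct_mulVec_eq_zero {L : Matrix ι ι ℂ}
    (h : ∀ v, star v ⬝ᵥ (L *ᵥ v) = 0) : L = 0 := by
  classical
  rw [← toEuclideanLin.map_eq_zero_iff, ← inner_map_self_eq_zero]
  intro x
  rw [← inner_conj_symm, EuclideanSpace.inner_eq_star_dotProduct, dotProduct_comm,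
    toEuclideanLin, ofLp_toLpLin, toLin'_apply, h, map_zero]

theorem eq_zero_of_forall_posSemidef_smul_add_sq_smul {L Q : Matrix ι ι ℂ}
    (h : ∀ t : ℝ, ((t : ℂ) • L + (t : ℂ) ^ 2 • Q).PosSemidef) : L = 0 :=
  eq_zero_of_forall_star_dotProduct_mulVec_eq_zero fun v =>
    Complex.eq_zero_of_forall_ofReal_mul_add_sq_mul_nonneg (w := star v ⬝ᵥ (Q *ᵥ v)) fun t => by
      simpa [add_mulVec, smul_mulVec, dotProduct_add] using (h t).dotProduct_mulVec_nonneg v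

variable [DecidableEq ι]

theorem map_mul_add_mul_of_map_mul_self
    (T : Matrix ι ι ℂ →ₗ[ℂ] Matrix ι ι ℂ) (hT : ∀ x, x.PosSemidef → (T x).PosSemidef)
    (hT1 : T 1 = 1) {a : Matrix ι ι ℂ} (ha : a.IsHermitian) (haa : T (a * a) = T a * T a)
    (X : Matrix ι ι ℂ) : T (a * X + X * a) = T a * T X + T X * T a := by
  have hermitian_case (s : Matrix ι ι ℂ) (hs : s.IsHermitian) :
      T (a * s + s * a) = T a * T s + T s * T a := by
    rw [← sub_eq_zero]
    refine eq_zero_of_forall_posSemidef_smul_add_sq_smul (Q := T (s * s) - T s * T s) fun t => ?_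
    have hks := posSemidef_map_mul_self_sub T hT hT1 (ha.add (hs.smul (Complex.conj_ofReal t)))
    have expand : T ((a + (t : ℂ) • s) * (a + (t : ℂ) • s)) -
          T (a + (t : ℂ) • s) * T (a + (t : ℂ) • s) =
        (t : ℂ) • (T (a * s + s * a) - (T a * T s + T s * T a)) +
          (t : ℂ) ^ 2 • (T (s * s) - T s * T s) := by
      simp only [add_mul, mul_add, Matrix.smul_mul, Matrix.mul_smul, map_add, map_smul, haa]
      module
    rw [← expand]
    exact hks
  obtain ⟨s₁, s₂, hs₁, hs₂, rfl⟩ : ∃ s₁ s₂ : Matrix ι ι ℂ, s₁.IsHermitian ∧ s₂.IsHermitian ∧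
      X = s₁ + Complex.I • s₂ :=
    ⟨realPart X, imaginaryPart X, (realPart X).2, (imaginaryPart X).2,
      (realPart_add_I_smul_imaginaryPart X).symm⟩
  have split (b Y Z : Matrix ι ι ℂ) : b * (Y + Complex.I • Z) + (Y + Complex.I • Z) * b =
      (b * Y + Y * b) + Complex.I • (b * Z + Z * b) := by
    simp only [mul_add, add_mul, Matrix.mul_smul, Matrix.smul_mul, smul_add]
    abel
  rw [split, map_add, map_smul, hermitian_case s₁ hs₁, hermitian_case s₂ hs₂, map_add, map_smul,
    split]

variable {B : Type*} [Ring B] [StarRing B] [Algebra ℂ B] [StarModule ℂ B]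

theorem map_mul_mul_add_mul_mul_of_map_starAlgHom
    (T : Matrix ι ι ℂ →ₗ[ℂ] Matrix ι ι ℂ) (hT : ∀ x, x.PosSemidef → (T x).PosSemidef)
    (φ : B →⋆ₐ[ℂ] Matrix ι ι ℂ) (hφ : ∀ b, T (φ b) = φ b) (b c : B) (X : Matrix ι ι ℂ) :
    T (φ b * X * φ c + φ c * X * φ b) = φ b * T X * φ c + φ c * T X * φ b := by
  have hT1 : T 1 = 1 := by simpa using hφ 1
  have jordan (b : B) (X : Matrix ι ι ℂ) : T (φ b * X + X * φ b) = φ b * T X + T X * φ b := by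
    have selfAdjoint_case (s : B) (hs : IsSelfAdjoint s) (X : Matrix ι ι ℂ) :
        T (φ s * X + X * φ s) = φ s * T X + T X * φ s := by
      have := map_mul_add_mul_of_map_mul_self T hT hT1 (hs.map φ)
        (by rw [← map_mul, hφ, hφ, map_mul]) X
      rwa [hφ] at this
    have hb : φ b = φ (realPart b) + Complex.I • φ (imaginaryPart b) := by
      rw [← map_smul, ← map_add, realPart_add_I_smul_imaginaryPart]
    rw [hb]
    exact T.map_jordan_add_smul (selfAdjoint_case _ (realPart b).2)
      (selfAdjoint_case _ (imaginaryPart b).2) _ X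
  refine T.map_mul_mul_add_mul_mul_of_jordan (jordan b) (jordan c) ?_ ?_ X <;>
    simpa only [← map_mul] using jordan _

def oneKroneckerStarAlgHom (m : Type*) {n R : Type*} [Fintype m] [Fintype n] [DecidableEq m]
    [DecidableEq n] [CommSemiring R] [StarRing R] :
    Matrix n n R →⋆ₐ[R] Matrix (m × n) (m × n) R where
  toFun b := 1 ⊗ₖ b
  map_one' := one_kronecker_one
  map_mul' b c := by rw [← mul_kronecker_mul, one_mul]
  map_zero' := kronecker_zero _
  map_add' := kronecker_add _
  commutes' r := by
    simp only [Algebra.algebraMap_eq_smul_one, kronecker_smul, one_kronecker_one]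
  map_star' b := by
    simp only [star_eq_conjTranspose, conjTranspose_kronecker, conjTranspose_one]

variable {m n : Type*}

theorem one_kronecker_single_mul_mul_one_kronecker_single {R : Type*} [Fintype m] [Fintype n]
    [DecidableEq m] [DecidableEq n] [CommSemiring R] (i j k l : n)
    (Y : Matrix (m × n) (m × n) R) :
    (1 ⊗ₖ single i j 1) * Y * (1 ⊗ₖ single k l 1) =
      Y.submatrix (·, j) (·, k) ⊗ₖ single i l (1 : R) := by
  ext ⟨x, y⟩ ⟨x', y'⟩
  simp only [mul_apply, kroneckerMap_apply, one_apply, single_apply, ite_and, mul_ite, mul_one,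
    mul_zero, ite_mul, one_mul, zero_mul, Finset.sum_ite_irrel, Fintype.sum_prod_type,
    Finset.sum_ite_eq, Finset.mem_univ, ↓reduceIte, Finset.sum_const_zero, Finset.sum_ite_eq',
    submatrix_apply]
  split_ifs <;> rfl

theorem submatrix_kronecker_prodMk {R : Type*} [CommSemiring R] (Z : Matrix m m R)
    (W : Matrix n n R) (j k : n) : (Z ⊗ₖ W).submatrix (·, j) (·, k) = W j k • Z := by
  ext x x'
  simp [mul_comm]

@[simps]
def cornerMap {R : Type*} [DecidableEq n] [CommSemiring R]
    (T : Matrix (m × n) (m × n) R →ₗ[R] Matrix (m × n) (m × n) R) (p : n) :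
    Matrix m m R →ₗ[R] Matrix m m R where
  toFun a := (T (a ⊗ₖ single p p 1)).submatrix (·, p) (·, p)
  map_add' a b := by simp only [add_kronecker, map_add]; rfl
  map_smul' c a := by simp only [smul_kronecker, map_smul]; rfl

theorem cornerMap_one {R : Type*} [DecidableEq m] [DecidableEq n] [CommSemiring R]
    {T : Matrix (m × n) (m × n) R →ₗ[R] Matrix (m × n) (m × n) R}
    (hT : ∀ b : Matrix n n R, T (1 ⊗ₖ b) = 1 ⊗ₖ b) (p : n) : cornerMap T p 1 = 1 := by
  simp [hT, submatrix_kronecker_prodMk]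

theorem cornerMap_posSemidef {𝕜 : Type*} [Fintype m] [Fintype n] [DecidableEq n] [RCLike 𝕜]
    {T : Matrix (m × n) (m × n) 𝕜 →ₗ[𝕜] Matrix (m × n) (m × n) 𝕜}
    (hT : ∀ x, x.PosSemidef → (T x).PosSemidef) (p : n) {a : Matrix m m 𝕜} (ha : a.PosSemidef) :
    (cornerMap T p a).PosSemidef := by
  have hE : (single p p (1 : 𝕜)).PosSemidef := by
    rw [← diagonal_single]
    exact .diagonal (Pi.single_nonneg.mpr zero_le_one)
  exact (hT _ (ha.kronecker hE)).submatrix _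

section Sandwich

variable {𝕜 : Type*} [Fintype m] [Fintype n] [DecidableEq m] [DecidableEq n] [Field 𝕜]
  [CharZero 𝕜] {T : Matrix (m × n) (m × n) 𝕜 →ₗ[𝕜] Matrix (m × n) (m × n) 𝕜}
  (hT : ∀ (b c : Matrix n n 𝕜) X, T ((1 ⊗ₖ b) * X * (1 ⊗ₖ c) + (1 ⊗ₖ c) * X * (1 ⊗ₖ b)) =
    (1 ⊗ₖ b) * T X * (1 ⊗ₖ c) + (1 ⊗ₖ c) * T X * (1 ⊗ₖ b))
include hT

theorem map_kronecker_single_self (p : n) (a : Matrix m m 𝕜) :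
    T (a ⊗ₖ single p p 1) = cornerMap T p a ⊗ₖ single p p 1 := by
  have h := hT (single p p 1) (single p p 1) (a ⊗ₖ single p p 1)
  simp only [one_kronecker_single_mul_mul_one_kronecker_single, submatrix_kronecker_prodMk,
    single_apply_same, one_smul, ← two_smul 𝕜, map_smul] at h
  exact smul_right_injective _ two_ne_zero h

theorem map_kronecker_single (p : n) (a : Matrix m m 𝕜) (k l : n) :
    T (a ⊗ₖ single k l 1) = cornerMap T p a ⊗ₖ single k l 1 := by
  have h := hT (single k p 1) (single p l 1) (a ⊗ₖ single p p 1)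
  simp only [one_kronecker_single_mul_mul_one_kronecker_single, submatrix_kronecker_prodMk,
    smul_kronecker, map_add, map_smul, map_kronecker_single_self hT, single_apply_same,
    one_smul] at h
  exact add_right_cancel h

theorem map_kronecker (p : n) (a : Matrix m m 𝕜) (b : Matrix n n 𝕜) :
    T (a ⊗ₖ b) = cornerMap T p a ⊗ₖ b := by
  have : T ∘ₗ kroneckerBilinear a = kroneckerBilinear (cornerMap T p a) :=
    ext_linearMap 𝕜 fun k l => LinearMap.ext_ring <| map_kronecker_single hT p a k l
  exact LinearMap.congr_fun this b

end Sandwich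

end Matrix

/-- Let `H_A`, `H_B` be finite-dimensional Hilbert spaces (operators modelled as
matrices, with the Kronecker product as tensor product) and
`T : B(H_A ⊗ H_B) → B(H_A ⊗ H_B)` a positive linear map.  Then `T (1 ⊗ b) = 1 ⊗ b`
for all `b` iff there exists a unital positive linear map `S : B(H_A) → B(H_A)` with
`T (a ⊗ b) = S a ⊗ b` for all `a`, `b`. -/
theorem fixes_second_factor_iff_tensor_form {m n : Type*}
    [Fintype m] [Fintype n] [DecidableEq m] [DecidableEq n]
    (T : Matrix (m × n) (m × n) ℂ →ₗ[ℂ] Matrix (m × n) (m × n) ℂ)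
    (hTpos : ∀ x : Matrix (m × n) (m × n) ℂ, x.PosSemidef → (T x).PosSemidef) :
    (∀ b : Matrix n n ℂ, T ((1 : Matrix m m ℂ) ⊗ₖ b) = (1 : Matrix m m ℂ) ⊗ₖ b) ↔
      ∃ S : Matrix m m ℂ →ₗ[ℂ] Matrix m m ℂ,
        S 1 = 1 ∧ (∀ a : Matrix m m ℂ, a.PosSemidef → (S a).PosSemidef) ∧
        ∀ (a : Matrix m m ℂ) (b : Matrix n n ℂ), T (a ⊗ₖ b) = S a ⊗ₖ b := by
  constructor
  · intro hfix
    rcases isEmpty_or_nonempty n with hn | ⟨⟨p⟩⟩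
    · exact ⟨LinearMap.id, rfl, fun a ha => ha, fun a b => Subsingleton.elim _ _⟩
    have hsandwich := map_mul_mul_add_mul_mul_of_map_starAlgHom T hTpos
      (oneKroneckerStarAlgHom m) hfix
    exact ⟨cornerMap T p, cornerMap_one hfix p, fun a => cornerMap_posSemidef hTpos p,
      map_kronecker hsandwich p⟩
  · rintro ⟨S, hS1, -, hST⟩ b
    rw [hST, hS1]
end

section
/- Every *-automorphism ψ of B(H), for H a finite-dimensional Hilbert space, is inner: there exists a unitary u ∈ B(H) with ψ(a) = u a u* for all a ∈ B(H). -/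
/-!
For a unit vector `e`, the image under `ψ` of the projection `|e⟩⟨e|` is a nonzero idempotent,
so it fixes some unit vector `f`. Since `(|x⟩⟨e|)* |y⟩⟨e| = ⟪x, y⟫ |e⟩⟨e|`, the map
`u x = ψ (|x⟩⟨e|) f` is a linear isometry, and `a |x⟩⟨e| = |a x⟩⟨e|` gives `ψ a ∘ u = u ∘ a`.
In finite dimension `u` is onto, hence unitary, and `ψ a = u a u*`.
-/

open ContinuousLinearMap InnerProductSpace
open scoped InnerProductSpace

theorem IsIdempotentElem.exists_norm_eq_one_apply_eq {𝕜 F : Type*} [RCLike 𝕜]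
    [NormedAddCommGroup F] [NormedSpace 𝕜 F] {q : F →L[𝕜] F} (hq : IsIdempotentElem q)
    (hq₀ : q ≠ 0) : ∃ f, ‖f‖ = 1 ∧ q f = f := by
  obtain ⟨y, hy⟩ : ∃ y, q y ≠ 0 := by
    by_contra! h
    exact hq₀ (ext h)
  refine ⟨(‖q y‖⁻¹ : 𝕜) • q y, norm_smul_inv_norm hy, ?_⟩
  rw [map_smul, ← mul_apply_eq_comp, hq.eq]

namespace StarAlgHom

variable {𝕜 E F : Type*} [RCLike 𝕜]
  [NormedAddCommGroup E] [InnerProductSpace 𝕜 E] [CompleteSpace E]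
  [NormedAddCommGroup F] [InnerProductSpace 𝕜 F] [CompleteSpace F]
  (ψ : (E →L[𝕜] E) →⋆ₐ[𝕜] (F →L[𝕜] F))

noncomputable def intertwiner (e : E) (f : F) : E →ₗ[𝕜] F where
  toFun x := ψ (rankOne 𝕜 x e) f
  map_add' x y := by simp
  map_smul' c x := by simp

@[simp]
theorem intertwiner_apply (e x : E) (f : F) : ψ.intertwiner e f x = ψ (rankOne 𝕜 x e) f := rfl

theorem apply_intertwiner (e : E) (f : F) (a : E →L[𝕜] E) (x : E) :
    ψ a (ψ.intertwiner e f x) = ψ.intertwiner e f (a x) := by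
  simp only [intertwiner_apply, ← mul_apply_eq_comp, ← map_mul, mul_def, comp_rankOne]

theorem inner_intertwiner {e : E} {f : F} (hf : ψ (rankOne 𝕜 e e) f = f) (x y : E) :
    ⟪ψ.intertwiner e f x, ψ.intertwiner e f y⟫_𝕜 = ⟪x, y⟫_𝕜 * ⟪f, f⟫_𝕜 := by
  have hrankOne : star (rankOne 𝕜 x e) * rankOne 𝕜 y e = ⟪x, y⟫_𝕜 • rankOne 𝕜 e e := by
    rw [star_eq_adjoint, adjoint_rankOne, mul_def, rankOne_comp_rankOne]
  calc ⟪ψ.intertwiner e f x, ψ.intertwiner e f y⟫_𝕜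
      = ⟪f, ψ (star (rankOne 𝕜 x e) * rankOne 𝕜 y e) f⟫_𝕜 := by
        rw [map_mul, map_star, mul_apply_eq_comp, star_eq_adjoint, adjoint_inner_right]
        rfl
    _ = ⟪x, y⟫_𝕜 * ⟪f, f⟫_𝕜 := by
        rw [hrankOne, map_smul, smul_apply, hf, inner_smul_right]

theorem exists_intertwining_linearIsometry_of_norm_eq_one {e : E} (he : ‖e‖ = 1)
    (hψ : ψ (rankOne 𝕜 e e) ≠ 0) : ∃ u : E →ₗᵢ[𝕜] F, ∀ a x, ψ a (u x) = u (a x) := by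
  obtain ⟨f, hf₁, hf⟩ :=
    ((isIdempotentElem_rankOne_self he).map ψ).exists_norm_eq_one_apply_eq hψ
  refine ⟨(ψ.intertwiner e f).isometryOfInner fun x y => ?_, ψ.apply_intertwiner e f⟩
  rw [inner_intertwiner ψ hf, inner_self_eq_norm_sq_to_K, hf₁]
  simp

theorem exists_intertwining_linearIsometry [Nontrivial E] (hψ : Function.Injective ψ) :
    ∃ u : E →ₗᵢ[𝕜] F, ∀ a x, ψ a (u x) = u (a x) := by
  obtain ⟨e₀, he₀⟩ := exists_ne (0 : E)
  have he : ‖(‖e₀‖⁻¹ : 𝕜) • e₀‖ = 1 := norm_smul_inv_norm he₀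
  have he_ne : (‖e₀‖⁻¹ : 𝕜) • e₀ ≠ 0 := norm_ne_zero_iff.mp (by simp [he])
  exact ψ.exists_intertwining_linearIsometry_of_norm_eq_one he
    ((map_ne_zero_iff ψ hψ).mpr (rankOne_ne_zero he_ne he_ne))

end StarAlgHom

/-- Every *-automorphism `ψ` of `B(H)`, for `H` a finite-dimensional (complex) Hilbert
space, is inner: there is a unitary `u ∈ B(H)` with `ψ a = u * a * u*` for all `a`. -/
theorem starAlgAut_inner (H : Type*) [NormedAddCommGroup H] [InnerProductSpace ℂ H]
    [FiniteDimensional ℂ H]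
    (ψ : (H →L[ℂ] H) ≃⋆ₐ[ℂ] (H →L[ℂ] H)) :
    ∃ u : H →L[ℂ] H, u ∈ unitary (H →L[ℂ] H) ∧ ∀ a : H →L[ℂ] H, ψ a = u * a * star u := by
  rcases subsingleton_or_nontrivial H with hH | hH
  · exact ⟨1, one_mem _, fun a => Subsingleton.elim _ _⟩
  obtain ⟨u, hu⟩ := ψ.toStarAlgHom.exists_intertwining_linearIsometry ψ.injective
  set v := u.toLinearIsometryEquiv rfl
  refine ⟨v, (Unitary.linearIsometryEquiv.symm v).2, fun a => ?_⟩
  ext x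
  have hvx : ψ a (v (v.symm x)) = v (a (v.symm x)) := hu a (v.symm x)
  rw [v.apply_symm_apply] at hvx
  rw [LinearIsometryEquiv.star_eq_symm]
  exact hvx
end

section
/- Let H_A, H_B, H_C be finite-dimensional Hilbert spaces, Θ = (id_A ⊗ ψ_BC) ∘ (χ_AB ⊗ id_C) with ψ_BC, χ_AB *-automorphisms as above, σ a state on B(H_B), and define the operation Γ on states of B(H_A ⊗ H_C) by Γ(ω)(c) := (ω ⊗ σ)(Θ(c ⊗ 1_B)) for c ∈ B(H_A ⊗ H_C), where the tensor factors are permuted appropriately. Then for any state ω on B(H_A ⊗ H_C), any unital CP map T_A : B(H_A) → B(H_A), and any c ∈ 1_A ⊗ B(H_C), Γ(ω ∘ (T_A ⊗ id_C))(c) = Γ(ω)(c). That is, a prior local operation on system A does not affect expectation values of C-observables after applying Γ. -/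
open Matrix Kronecker ComplexOrder

variable {a b c : Type*} [Fintype a] [Fintype b] [Fintype c]
  [DecidableEq a] [DecidableEq b] [DecidableEq c]

/-- Reassociation `B((H_A ⊗ H_B) ⊗ H_C) ≅ B(H_A ⊗ (H_B ⊗ H_C))` of matrix indices. -/
def assocM (M : Matrix ((a × b) × c) ((a × b) × c) ℂ) :
    Matrix (a × b × c) (a × b × c) ℂ :=
  Matrix.reindex (Equiv.prodAssoc a b c) (Equiv.prodAssoc a b c) M

/-- The embedding `B(H_A ⊗ H_C) → B(H_A ⊗ H_B ⊗ H_C)`, `x ↦ x ⊗ 1_B` with the tensor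
factors permuted appropriately. -/
def embedAC (M : Matrix (a × c) (a × c) ℂ) : Matrix (a × b × c) (a × b × c) ℂ :=
  fun p q => if p.2.1 = q.2.1 then M (p.1, p.2.2) (q.1, q.2.2) else 0

/-- The ampliation `T ⊗ id_γ` of a map `T : B(H_α) → B(H_α)`. -/
def tensorId {α γ : Type*} [Fintype α] [Fintype γ]
    (T : Matrix α α ℂ → Matrix α α ℂ)
    (M : Matrix (α × γ) (α × γ) ℂ) : Matrix (α × γ) (α × γ) ℂ :=
  fun p q => T (fun i j => M (i, p.2) (j, q.2)) p.1 q.1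

/-- The product functional `ω ⊗ σ` applied to an operator on `H_A ⊗ H_B ⊗ H_C`, where
`ω` is a functional on `B(H_A ⊗ H_C)` and `σ` one on `B(H_B)`, determined by its values
on matrix units. -/
noncomputable def pairDual (ω : Matrix (a × c) (a × c) ℂ → ℂ)
    (σ : Matrix b b ℂ → ℂ) (M : Matrix (a × b × c) (a × b × c) ℂ) : ℂ :=
  ∑ i : a, ∑ j : a, ∑ k : b, ∑ l : b, ∑ s : c, ∑ t : c,
    M (i, (k, s)) (j, (l, t)) * ω (Matrix.single (i, s) (j, t) 1) *
      σ (Matrix.single k l 1)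

/-!
`χ_AB ⊗ id_C` and `id_A ⊗ ψ_BC` are unital, so `Θ` sends `1_A ⊗ 1_B ⊗ x₀` to
`1_A ⊗ ψ_BC (1_B ⊗ x₀)`. Paired with `ω ⊗ σ`, an operator of the form `1_A ⊗ N` only sees the
restriction of `ω` to `1_A ⊗ B(H_C)`, and this restriction is unchanged by precomposing with
`T_A ⊗ id_C` because `T_A 1 = 1`.
-/

lemma embedAC_kronecker {l m n : Type*} [DecidableEq m] (A : Matrix l l ℂ) (X : Matrix n n ℂ) :
    (embedAC (A ⊗ₖ X) : Matrix (l × m × n) (l × m × n) ℂ) = A ⊗ₖ ((1 : Matrix m m ℂ) ⊗ₖ X) := by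
  ext ⟨i, k, s⟩ ⟨j, k', t⟩
  by_cases hk : k = k' <;> simp [embedAC, hk]

lemma assocM_one_kronecker {l m n : Type*} [DecidableEq l] [DecidableEq m] (X : Matrix n n ℂ) :
    assocM ((1 : Matrix (l × m) (l × m) ℂ) ⊗ₖ X) = 1 ⊗ₖ ((1 : Matrix m m ℂ) ⊗ₖ X) := by
  rw [← one_kronecker_one]
  exact kronecker_assoc _ _ _

lemma tensorId_one_kronecker {α γ : Type*} [Fintype α] [Fintype γ] [DecidableEq α]
    (T : Matrix α α ℂ →ₗ[ℂ] Matrix α α ℂ) (X : Matrix γ γ ℂ) :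
    tensorId (fun x => T x) (1 ⊗ₖ X) = T 1 ⊗ₖ X := by
  ext ⟨i, s⟩ ⟨j, t⟩
  have hslice : (fun i' j' => ((1 : Matrix α α ℂ) ⊗ₖ X) (i', s) (j', t)) =
      X s t • (1 : Matrix α α ℂ) := by
    ext i' j'
    rw [kronecker_apply, Matrix.smul_apply, smul_eq_mul, mul_comm]
  change T (fun i' j' => ((1 : Matrix α α ℂ) ⊗ₖ X) (i', s) (j', t)) i j = _
  rw [hslice, map_smul, Matrix.smul_apply, smul_eq_mul, kronecker_apply, mul_comm]

def tensorIdLinear {α γ : Type*} [Fintype α] [Fintype γ]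
    (T : Matrix α α ℂ →ₗ[ℂ] Matrix α α ℂ) :
    Matrix (α × γ) (α × γ) ℂ →ₗ[ℂ] Matrix (α × γ) (α × γ) ℂ where
  toFun := tensorId fun x => T x
  map_add' M N := by
    ext p q
    exact congrFun (congrFun (map_add T _ _) p.1) q.1
  map_smul' z M := by
    ext p q
    exact congrFun (congrFun (map_smul T z _) p.1) q.1

lemma tensorIdLinear_apply {α γ : Type*} [Fintype α] [Fintype γ]
    (T : Matrix α α ℂ →ₗ[ℂ] Matrix α α ℂ) (M : Matrix (α × γ) (α × γ) ℂ) :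
    tensorIdLinear T M = tensorId (fun x => T x) M :=
  rfl

lemma sum_single_eq_one_kronecker_single {α γ : Type*} [Fintype α] [DecidableEq α]
    [DecidableEq γ] (s t : γ) :
    ∑ i : α, single (i, s) (i, t) (1 : ℂ) = 1 ⊗ₖ single s t 1 := by
  ext ⟨i, s'⟩ ⟨j, t'⟩
  rw [Matrix.sum_apply, kronecker_apply, Finset.sum_eq_single i (fun k _ hk => ?_) (by simp)]
  · by_cases hij : i = j <;> simp [single_apply, one_apply, hij]
  · simp [hk]

lemma pairDual_one_kronecker (w : Module.Dual ℂ (Matrix (a × c) (a × c) ℂ))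
    (σ : Matrix b b ℂ → ℂ) (N : Matrix (b × c) (b × c) ℂ) :
    pairDual w σ (1 ⊗ₖ N) = ∑ k : b, ∑ l : b, ∑ s : c, ∑ t : c,
      N (k, s) (l, t) * w (1 ⊗ₖ single s t 1) * σ (single k l 1) := by
  simp_rw [← sum_single_eq_one_kronecker_single, map_sum, Finset.mul_sum, Finset.sum_mul]
  simp only [pairDual, kronecker_apply, one_apply, ite_mul, one_mul, zero_mul,
    Finset.sum_ite_eq, Finset.mem_univ, if_true, Finset.sum_ite_irrel, Finset.sum_const_zero]
  simp only [Finset.sum_comm (s := (Finset.univ : Finset a))]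

lemma pairDual_one_kronecker_congr {w w' : Module.Dual ℂ (Matrix (a × c) (a × c) ℂ)}
    (h : ∀ Y : Matrix c c ℂ, w (1 ⊗ₖ Y) = w' (1 ⊗ₖ Y))
    (σ : Matrix b b ℂ → ℂ) (N : Matrix (b × c) (b × c) ℂ) :
    pairDual w σ (1 ⊗ₖ N) = pairDual w' σ (1 ⊗ₖ N) := by
  simp only [pairDual_one_kronecker, h]

theorem prior_local_operation_no_effect_general
    (ψBC : Matrix (b × c) (b × c) ℂ ≃⋆ₐ[ℂ] Matrix (b × c) (b × c) ℂ)
    (χAB : Matrix (a × b) (a × b) ℂ ≃⋆ₐ[ℂ] Matrix (a × b) (a × b) ℂ)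
    (Ψ Χ Θ : Matrix (a × b × c) (a × b × c) ℂ ≃⋆ₐ[ℂ] Matrix (a × b × c) (a × b × c) ℂ)
    (hΨ : ∀ (M : Matrix a a ℂ) (N : Matrix (b × c) (b × c) ℂ),
      Ψ (M ⊗ₖ N) = M ⊗ₖ ψBC N)
    (hΧ : ∀ (M : Matrix (a × b) (a × b) ℂ) (N : Matrix c c ℂ),
      Χ (assocM (M ⊗ₖ N)) = assocM (χAB M ⊗ₖ N))
    (hΘ : ∀ M, Θ M = Ψ (Χ M))
    (σ : Module.Dual ℂ (Matrix b b ℂ))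
    (ω : Module.Dual ℂ (Matrix (a × c) (a × c) ℂ))
    (TA : Matrix a a ℂ →ₗ[ℂ] Matrix a a ℂ) (hTA1 : TA 1 = 1)
    (x₀ : Matrix c c ℂ) :
    pairDual (fun M => ω (tensorId (fun x => TA x) M)) (fun N => σ N)
        (Θ (embedAC ((1 : Matrix a a ℂ) ⊗ₖ x₀))) =
      pairDual (fun M => ω M) (fun N => σ N)
        (Θ (embedAC ((1 : Matrix a a ℂ) ⊗ₖ x₀))) := by
  have hΘx : Θ (embedAC ((1 : Matrix a a ℂ) ⊗ₖ x₀)) = 1 ⊗ₖ ψBC (1 ⊗ₖ x₀) := by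
    rw [hΘ, embedAC_kronecker, ← assocM_one_kronecker, hΧ, map_one, assocM_one_kronecker, hΨ]
  have hω : ∀ Y : Matrix c c ℂ, (ω ∘ₗ tensorIdLinear TA) (1 ⊗ₖ Y) = ω (1 ⊗ₖ Y) := fun Y => by
    rw [LinearMap.comp_apply, tensorIdLinear_apply, tensorId_one_kronecker, hTA1]
  rw [hΘx]
  exact pairDual_one_kronecker_congr (w := ω ∘ₗ tensorIdLinear TA) hω σ _

/-- Let `Θ = (id_A ⊗ ψ_BC) ∘ (χ_AB ⊗ id_C)` with `ψ_BC`, `χ_AB` *-automorphisms,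
`σ` a state on `B(H_B)`, and define the operation `Γ` on states of `B(H_A ⊗ H_C)` by
`Γ(ω)(x) := (ω ⊗ σ)(Θ (x ⊗ 1_B))` (tensor factors permuted appropriately).
Then for any state `ω` on `B(H_A ⊗ H_C)`, any unital completely positive map
`T_A : B(H_A) → B(H_A)`, and any `x = 1_A ⊗ x₀ ∈ 1_A ⊗ B(H_C)`,
`Γ(ω ∘ (T_A ⊗ id_C))(x) = Γ(ω)(x)`: a prior local operation on system `A` does not
affect expectation values of `C`-observables after applying `Γ`. -/
theorem prior_local_operation_no_effect
    (ψBC : Matrix (b × c) (b × c) ℂ ≃⋆ₐ[ℂ] Matrix (b × c) (b × c) ℂ)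
    (χAB : Matrix (a × b) (a × b) ℂ ≃⋆ₐ[ℂ] Matrix (a × b) (a × b) ℂ)
    (Ψ Χ Θ : Matrix (a × b × c) (a × b × c) ℂ ≃⋆ₐ[ℂ] Matrix (a × b × c) (a × b × c) ℂ)
    (hΨ : ∀ (M : Matrix a a ℂ) (N : Matrix (b × c) (b × c) ℂ),
      Ψ (M ⊗ₖ N) = M ⊗ₖ ψBC N)
    (hΧ : ∀ (M : Matrix (a × b) (a × b) ℂ) (N : Matrix c c ℂ),
      Χ (assocM (M ⊗ₖ N)) = assocM (χAB M ⊗ₖ N))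
    (hΘ : ∀ M, Θ M = Ψ (Χ M))
    (σ : Module.Dual ℂ (Matrix b b ℂ))
    (hσpos : ∀ x : Matrix b b ℂ, 0 ≤ σ (xᴴ * x)) (hσ1 : σ 1 = 1)
    (ω : Module.Dual ℂ (Matrix (a × c) (a × c) ℂ))
    (hωpos : ∀ x : Matrix (a × c) (a × c) ℂ, 0 ≤ ω (xᴴ * x)) (hω1 : ω 1 = 1)
    (TA : Matrix a a ℂ →ₗ[ℂ] Matrix a a ℂ) (hTA1 : TA 1 = 1)
    (hTAcp : ∀ (k : ℕ) (M : Matrix (a × Fin k) (a × Fin k) ℂ), M.PosSemidef →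
      (tensorId (fun x => TA x) M).PosSemidef)
    (x₀ : Matrix c c ℂ) :
    pairDual (fun M => ω (tensorId (fun x => TA x) M)) (fun N => σ N)
        (Θ (embedAC ((1 : Matrix a a ℂ) ⊗ₖ x₀))) =
      pairDual (fun M => ω M) (fun N => σ N)
        (Θ (embedAC ((1 : Matrix a a ℂ) ⊗ₖ x₀))) :=
  prior_local_operation_no_effect_general ψBC χAB Ψ Χ Θ hΨ hΧ hΘ σ ω TA hTA1 x₀
end
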